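/- arXiv:2602.00784 — 6 statements merged into one kernel-verified Lean document; each statement's English description precedes it below -/
import Mathlib

section
/- The discrete expected shortfall dES_{k/n}: ℝ^n → ℝ defined by dES_{k/n}(x) = −(1/k)∑_{i=1}^k x_{i:n} is a coherent risk estimator: it is monotone (coordinatewise x ≤ y implies dES_{k/n}(x) ≥ dES_{k/n}(y)), cash additive (dES_{k/n}(x + m·1) = dES_{k/n}(x) − m), positively homogeneous, and subadditive. -/
/-- The `i`-th order statistic (`i`-th smallest coordinate, `i = 1,…,n`) of `x ∈ ℝ^n`. -/
noncomputable def orderStat {n : ℕ} (x : Fin n → ℝ) (i : ℕ) : ℝ :=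
  ((Finset.univ.val.map x).sort (· ≤ ·)).getD (i - 1) 0

/-- Discrete expected shortfall at level `k/n`: `-(1/k) ∑_{i=1}^k x_{i:n}`. -/
noncomputable def dES {n : ℕ} (k : ℕ) (x : Fin n → ℝ) : ℝ :=
  -(1 / (k : ℝ)) * ∑ i ∈ Finset.Icc 1 k, orderStat x i

/-!
The sum `S_k x = ∑_{i ≤ k} x_{i:n}` of the `k` smallest coordinates is the minimum of
`∑_{i ∈ A} x i` over `k`-element sets `A`: listing `A` in sorted position order, its `j`-th
element sits at position at least `j`, hence carries a value at least `x_{j:n}`. As a minimum of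
linear functionals attained on some `A`, `S_k` is monotone and superadditive, which gives
monotonicity and subadditivity of `dES = -S_k / k`. Cash additivity and positive homogeneity hold
because order statistics commute with the monotone maps `t ↦ t + m` and `t ↦ l t`.
-/

open Finset

lemma Fin.val_le_val_of_strictMono {k n : ℕ} {f : Fin k → Fin n} (hf : StrictMono f)
    (j : Fin k) : (j : ℕ) ≤ f j := by
  have hcard := card_le_card_of_injOn f (s := Iic j) (t := Iic (f j))
    (fun i hi => by simpa using hf.monotone (by simpa using hi)) hf.injective.injOn
  simpa using hcard

lemma Monotone.sum_castLE_le_sum {M : Type*} [AddCommMonoid M] [PartialOrder M]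
    [IsOrderedAddMonoid M] {n k : ℕ} (hkn : k ≤ n) {g : Fin n → M} (hg : Monotone g)
    {B : Finset (Fin n)} (hB : #B = k) :
    ∑ j : Fin k, g (Fin.castLE hkn j) ≤ ∑ b ∈ B, g b := by
  rw [← image_orderEmbOfFin_univ B hB, sum_image fun _ _ _ _ h => (B.orderEmbOfFin hB).injective h]
  exact sum_le_sum fun j _ => hg (Fin.val_le_val_of_strictMono (B.orderEmbOfFin hB).strictMono j)

lemma Multiset.sort_map_univ_eq_ofFn {α : Type*} [LinearOrder α] {n : ℕ} (y : Fin n → α)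
    (σ : Equiv.Perm (Fin n)) (h : Monotone (y ∘ σ)) :
    (univ.val.map y).sort (· ≤ ·) = List.ofFn (y ∘ σ) := by
  refine List.Perm.eq_of_pairwise' (Multiset.pairwise_sort _ _) h.sortedLE_ofFn.pairwise ?_
  rw [← Multiset.coe_eq_coe, Multiset.sort_eq, ← Fin.univ_val_map, ← Multiset.map_map,
    Multiset.map_univ_val_equiv]

lemma orderStat_succ_eq {n : ℕ} {x : Fin n → ℝ} {σ : Equiv.Perm (Fin n)}
    (h : Monotone (x ∘ σ)) (j : Fin n) : orderStat x (j + 1) = x (σ j) := by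
  rw [orderStat, Multiset.sort_map_univ_eq_ofFn x σ h, Nat.add_sub_cancel,
    List.getD_eq_getElem _ _ (by simp)]
  simp

lemma orderStat_comp {n : ℕ} {f : ℝ → ℝ} (hf : Monotone f) (x : Fin n → ℝ) {i : ℕ}
    (hi : 1 ≤ i) (hin : i ≤ n) : orderStat (fun j => f (x j)) i = f (orderStat x i) := by
  obtain ⟨j, rfl⟩ : ∃ j : Fin n, i = j + 1 := ⟨⟨i - 1, by omega⟩, by simp; omega⟩
  have hsort := Tuple.monotone_sort x
  rw [orderStat_succ_eq hsort, orderStat_succ_eq (σ := Tuple.sort x) (hf.comp hsort)]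

lemma sum_Icc_orderStat_eq {n k : ℕ} (hkn : k ≤ n) (x : Fin n → ℝ) :
    ∑ i ∈ Icc 1 k, orderStat x i = ∑ j : Fin k, x (Tuple.sort x (Fin.castLE hkn j)) := by
  rw [← Ico_add_one_right_eq_Icc, sum_Ico_eq_sum_range, ← Fin.sum_univ_eq_sum_range]
  refine sum_congr rfl fun j _ => ?_
  rw [add_comm, ← orderStat_succ_eq (Tuple.monotone_sort x)]
  rfl

lemma sum_Icc_orderStat_le_sum {n k : ℕ} (hkn : k ≤ n) (x : Fin n → ℝ)
    {A : Finset (Fin n)} (hA : #A = k) : ∑ i ∈ Icc 1 k, orderStat x i ≤ ∑ i ∈ A, x i := by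
  have hsum : ∑ i ∈ A, x i = ∑ b ∈ A.map (Tuple.sort x).symm.toEmbedding, x (Tuple.sort x b) := by
    simp [sum_map]
  rw [sum_Icc_orderStat_eq hkn, hsum]
  exact (Tuple.monotone_sort x).sum_castLE_le_sum hkn (by simpa using hA)

lemma exists_sum_Icc_orderStat_eq {n k : ℕ} (hkn : k ≤ n) (x : Fin n → ℝ) :
    ∃ A : Finset (Fin n), #A = k ∧ ∑ i ∈ Icc 1 k, orderStat x i = ∑ i ∈ A, x i := by
  have hinj : Function.Injective fun j => Tuple.sort x (Fin.castLE hkn j) :=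
    (Tuple.sort x).injective.comp (Fin.castLE_injective hkn)
  refine ⟨univ.map ⟨_, hinj⟩, by simp, ?_⟩
  rw [sum_Icc_orderStat_eq hkn, sum_map]
  rfl

lemma sum_Icc_orderStat_mono {n k : ℕ} (hkn : k ≤ n) {x y : Fin n → ℝ} (hxy : ∀ i, x i ≤ y i) :
    ∑ i ∈ Icc 1 k, orderStat x i ≤ ∑ i ∈ Icc 1 k, orderStat y i := by
  obtain ⟨A, hA, hy⟩ := exists_sum_Icc_orderStat_eq hkn y
  rw [hy]
  exact (sum_Icc_orderStat_le_sum hkn x hA).trans (sum_le_sum fun i _ => hxy i)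

lemma sum_Icc_orderStat_add_le {n k : ℕ} (hkn : k ≤ n) (x y : Fin n → ℝ) :
    ∑ i ∈ Icc 1 k, orderStat x i + ∑ i ∈ Icc 1 k, orderStat y i ≤
      ∑ i ∈ Icc 1 k, orderStat (fun i => x i + y i) i := by
  obtain ⟨A, hA, hxy⟩ := exists_sum_Icc_orderStat_eq hkn fun i => x i + y i
  rw [hxy, sum_add_distrib]
  exact add_le_add (sum_Icc_orderStat_le_sum hkn x hA) (sum_Icc_orderStat_le_sum hkn y hA)

lemma sum_Icc_orderStat_comp {n k : ℕ} (hkn : k ≤ n) {f : ℝ → ℝ} (hf : Monotone f)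
    (x : Fin n → ℝ) :
    ∑ i ∈ Icc 1 k, orderStat (fun j => f (x j)) i = ∑ i ∈ Icc 1 k, f (orderStat x i) :=
  sum_congr rfl fun i hi => by
    rw [mem_Icc] at hi
    exact orderStat_comp hf x hi.1 (hi.2.trans hkn)

lemma dES_antitone {n k : ℕ} (hkn : k ≤ n) {x y : Fin n → ℝ} (hxy : ∀ i, x i ≤ y i) :
    dES k y ≤ dES k x :=
  mul_le_mul_of_nonpos_left (sum_Icc_orderStat_mono hkn hxy) (by simp)

lemma dES_add_const {n k : ℕ} (hk : 1 ≤ k) (hkn : k ≤ n) (x : Fin n → ℝ) (m : ℝ) :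
    dES k (fun i => x i + m) = dES k x - m := by
  have hk0 : (k : ℝ) ≠ 0 := by positivity
  rw [dES, dES, sum_Icc_orderStat_comp hkn (add_left_mono (a := m)) x,
    sum_add_distrib, sum_const, Nat.card_Icc, Nat.add_sub_cancel, nsmul_eq_mul]
  field_simp
  ring

lemma dES_const_mul {n k : ℕ} (hkn : k ≤ n) (x : Fin n → ℝ) {l : ℝ} (hl : 0 ≤ l) :
    dES k (fun i => l * x i) = l * dES k x := by
  rw [dES, dES, sum_Icc_orderStat_comp hkn (monotone_mul_left_of_nonneg hl) x,
    ← mul_sum]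
  ring

lemma dES_add_le {n k : ℕ} (hkn : k ≤ n) (x y : Fin n → ℝ) :
    dES k (fun i => x i + y i) ≤ dES k x + dES k y := by
  rw [dES, dES, dES, ← mul_add]
  exact mul_le_mul_of_nonpos_left (sum_Icc_orderStat_add_le hkn x y) (by simp)

/-- `dES_{k/n}` is a coherent risk estimator: monotone, cash additive,
positively homogeneous and subadditive. -/
theorem dES_is_coherent (n k : ℕ) (hk1 : 1 ≤ k) (hkn : k ≤ n) :
    (∀ x y : Fin n → ℝ, (∀ i, x i ≤ y i) → dES k y ≤ dES k x) ∧
    (∀ (x : Fin n → ℝ) (m : ℝ), dES k (fun i => x i + m) = dES k x - m) ∧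
    (∀ (x : Fin n → ℝ) (l : ℝ), 0 ≤ l → dES k (fun i => l * x i) = l * dES k x) ∧
    (∀ x y : Fin n → ℝ, dES k (fun i => x i + y i) ≤ dES k x + dES k y) :=
  ⟨fun _ _ => dES_antitone hkn, dES_add_const hk1 hkn, fun x _ hl => dES_const_mul hkn x hl,
    fun x y => dES_add_le hkn x y⟩
end

section
/- For any a ∈ Δ_n^↓, the functional ρ(x) := ∑_{i=1}^n a_i(−x_{i:n}) on ℝ^n is subadditive: ρ(x+y) ≤ ρ(x) + ρ(y) for all x, y ∈ ℝ^n. -/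
/-!
Writing `τ_x` for the permutation sorting `x` increasingly, `x_{i:n} = x (τ_x i)`. Since the
weights are non-increasing, the rearrangement inequality says that `∑ aᵢ x (σ i)` is minimised
over all permutations `σ` by `σ = τ_x`. So `∑ aᵢ x_{i:n}` is a minimum of linear functions of `x`,
hence superadditive, and `ρ` is its negative.
-/

open Finset

theorem Tuple.sort_univ_val_map_eq_ofFn {α : Type*} [LinearOrder α] {n : ℕ} (x : Fin n → α) :
    (univ.val.map x).sort (· ≤ ·) = List.ofFn (x ∘ Tuple.sort x) := by
  refine List.Perm.eq_of_pairwise' (Multiset.pairwise_sort _ _)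
    (Tuple.monotone_sort x).sortedLE_ofFn.pairwise ?_
  rw [← Multiset.coe_eq_coe, Multiset.sort_eq, Fin.univ_val_map]
  exact Multiset.coe_eq_coe.mpr ((Tuple.sort x).ofFn_comp_perm x).symm

theorem orderStat_add_one {n : ℕ} (x : Fin n → ℝ) (i : Fin n) :
    orderStat x (i + 1) = x (Tuple.sort x i) := by
  rw [orderStat, Nat.add_sub_cancel, Tuple.sort_univ_val_map_eq_ofFn,
    List.getD_eq_getElem _ _ (by simp), List.getElem_ofFn, Function.comp_apply]

theorem sum_Icc_mul_orderStat {n : ℕ} (a : ℕ → ℝ) (x : Fin n → ℝ) :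
    ∑ i ∈ Icc 1 n, a i * orderStat x i = ∑ i : Fin n, a (i + 1) * x (Tuple.sort x i) := by
  rw [← Finset.Ico_add_one_right_eq_Icc, sum_Ico_eq_sum_range, ← Fin.sum_univ_eq_sum_range]
  exact sum_congr rfl fun i _ => by rw [add_comm 1, orderStat_add_one]

section SortedWeightedSum

variable {α : Type*} [Semiring α] [LinearOrder α] [IsStrictOrderedRing α] [ExistsAddOfLE α]
  {n : ℕ} {w : Fin n → α}

theorem Antitone.sum_mul_comp_sort_le_sum_mul_comp_perm (hw : Antitone w) (x : Fin n → α)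
    (σ : Equiv.Perm (Fin n)) :
    ∑ i, w i * x (Tuple.sort x i) ≤ ∑ i, w i * x (σ i) := by
  have hanti : Antivary w (x ∘ Tuple.sort x) := hw.antivary (Tuple.monotone_sort x)
  simpa using hanti.sum_mul_le_sum_mul_comp_perm (σ := (Tuple.sort x)⁻¹ * σ)

theorem Antitone.sum_mul_comp_sort_superadditive (hw : Antitone w) (x y : Fin n → α) :
    ∑ i, w i * x (Tuple.sort x i) + ∑ i, w i * y (Tuple.sort y i) ≤
      ∑ i, w i * (x + y) (Tuple.sort (x + y) i) :=
  calc ∑ i, w i * x (Tuple.sort x i) + ∑ i, w i * y (Tuple.sort y i)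
      ≤ ∑ i, w i * x (Tuple.sort (x + y) i) + ∑ i, w i * y (Tuple.sort (x + y) i) :=
        add_le_add (hw.sum_mul_comp_sort_le_sum_mul_comp_perm x _)
          (hw.sum_mul_comp_sort_le_sum_mul_comp_perm y _)
    _ = ∑ i, w i * (x + y) (Tuple.sort (x + y) i) := by
        simp only [← sum_add_distrib, ← mul_add, Pi.add_apply]

end SortedWeightedSum

theorem L_functional_subadditive_general (n : ℕ) (a : ℕ → ℝ)
    (ha_mono : ∀ i j, 1 ≤ i → i ≤ j → j ≤ n → a j ≤ a i)
    (x y : Fin n → ℝ) :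
    ∑ i ∈ Finset.Icc 1 n, a i * (-(orderStat (fun j => x j + y j) i)) ≤
      (∑ i ∈ Finset.Icc 1 n, a i * (-(orderStat x i))) +
        ∑ i ∈ Finset.Icc 1 n, a i * (-(orderStat y i)) := by
  have hw : Antitone fun i : Fin n => a (i + 1) := fun i j hij =>
    ha_mono _ _ (Nat.le_add_left 1 i) (Nat.add_le_add_right hij 1) j.isLt
  simp only [mul_neg, sum_neg_distrib, ← neg_add, neg_le_neg_iff, sum_Icc_mul_orderStat]
  exact hw.sum_mul_comp_sort_superadditive x y

/-- For `a ∈ Δ_n^↓`, the L-functional `ρ(x) = ∑_{i=1}^n a_i (-x_{i:n})`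
is subadditive. -/
theorem L_functional_subadditive (n : ℕ) (a : ℕ → ℝ)
    (ha_nonneg : ∀ i ∈ Finset.Icc 1 n, 0 ≤ a i)
    (ha_mono : ∀ i j, 1 ≤ i → i ≤ j → j ≤ n → a j ≤ a i)
    (ha_sum : ∑ i ∈ Finset.Icc 1 n, a i = 1)
    (x y : Fin n → ℝ) :
    ∑ i ∈ Finset.Icc 1 n, a i * (-(orderStat (fun j => x j + y j) i)) ≤
      (∑ i ∈ Finset.Icc 1 n, a i * (-(orderStat x i))) +
        ∑ i ∈ Finset.Icc 1 n, a i * (-(orderStat y i)) :=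
  L_functional_subadditive_general n a ha_mono x y
end

section
/- If x, y ∈ ℝ^n are comonotonic, i.e., (x_i − x_j)(y_i − y_j) ≥ 0 for all i, j, then the order statistics are additive: (x+y)_{i:n} = x_{i:n} + y_{i:n} for all i. -/
theorem Multiset.sort_map_univ_eq_ofFn_comp {α : Type*} [LinearOrder α] {n : ℕ}
    {f : Fin n → α} {σ : Equiv.Perm (Fin n)} (hf : Monotone (f ∘ σ)) :
    (Finset.univ.val.map f).sort (· ≤ ·) = List.ofFn (f ∘ σ) := by
  refine List.Perm.eq_of_sortedLE (Multiset.pairwise_sort _ _).sortedLE hf.sortedLE_ofFn ?_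
  rw [← Multiset.coe_eq_coe, Multiset.sort_eq, Fin.univ_val_map, Multiset.coe_eq_coe]
  exact (σ.ofFn_comp_perm f).symm

theorem orderStat_eq_apply_of_monotone_comp {n : ℕ} {x : Fin n → ℝ} {σ : Equiv.Perm (Fin n)}
    (hx : Monotone (x ∘ σ)) {i : ℕ} (hi : i ∈ Finset.Icc 1 n) :
    orderStat x i = x (σ ⟨i - 1, by grind⟩) := by
  rw [orderStat, Multiset.sort_map_univ_eq_ofFn_comp hx]
  simp [show i - 1 < n by grind]

theorem Monotone.of_add_of_comonotone {ι α : Type*} [Preorder ι] [Ring α] [LinearOrder α]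
    [IsStrictOrderedRing α] {f g : ι → α} (hcom : ∀ i j, 0 ≤ (f i - f j) * (g i - g j))
    (hfg : Monotone (f + g)) : Monotone f ∧ Monotone g := by
  constructor
  · intro i j hij
    by_contra! hf
    have hg : g j ≤ g i :=
      sub_nonneg.mp (nonneg_of_mul_nonneg_right (hcom i j) (sub_pos.mpr hf))
    exact (hfg hij).not_gt (add_lt_add_of_lt_of_le hf hg)
  · intro i j hij
    by_contra! hg
    have hf : f j ≤ f i :=
      sub_nonneg.mp (nonneg_of_mul_nonneg_left (hcom i j) (sub_pos.mpr hg))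
    exact (hfg hij).not_gt (add_lt_add_of_le_of_lt hf hg)

/-- If `x` and `y` are comonotonic, then the order statistics of the sum
are the sums of the order statistics. -/
theorem orderStat_add_of_comonotonic (n : ℕ) (x y : Fin n → ℝ)
    (hcom : ∀ i j, 0 ≤ (x i - x j) * (y i - y j)) :
    ∀ i ∈ Finset.Icc 1 n,
      orderStat (fun j => x j + y j) i = orderStat x i + orderStat y i := by
  intro i hi
  set σ := Tuple.sort (x + y)
  have hsum : Monotone ((x + y) ∘ σ) := Tuple.monotone_sort _
  obtain ⟨hx, hy⟩ : Monotone (x ∘ σ) ∧ Monotone (y ∘ σ) :=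
    Monotone.of_add_of_comonotone (fun i j => hcom (σ i) (σ j)) hsum
  rw [orderStat_eq_apply_of_monotone_comp hx hi, orderStat_eq_apply_of_monotone_comp hy hi]
  exact orderStat_eq_apply_of_monotone_comp hsum hi
end

section
/- Let (φ_m) be a sequence of non-increasing nonnegative functions on [0,1] with ∫_0^1 φ_m = 1 and sup_m ‖φ_m‖_∞ < ∞, and let φ be a bounded non-increasing nonnegative function with ∫_0^1 φ = 1. If ∫_0^t φ_m(s) ds → ∫_0^t φ(s) ds for every t ∈ (0,1), then φ_m(t) → φ(t) for almost every t ∈ (0,1). -/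
open Filter MeasureTheory

/-- Average bounds for an antitone function on a subinterval of `[0,1]`. -/
lemma avg_bounds (f : ℝ → ℝ) (hf : AntitoneOn f (Set.Icc (0 : ℝ) 1))
    {a b : ℝ} (ha : 0 ≤ a) (hab : a ≤ b) (hb : b ≤ 1) :
    (b - a) * f b ≤ (∫ s in a..b, f s) ∧ (∫ s in a..b, f s) ≤ (b - a) * f a := by
  have hsub : Set.uIcc a b ⊆ Set.Icc (0 : ℝ) 1 := by
    rw [Set.uIcc_of_le hab]
    exact Set.Icc_subset_Icc ha hb
  have hint : IntervalIntegrable f volume a b :=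
    (hf.mono hsub).intervalIntegrable
  have hIcc : Set.Icc a b ⊆ Set.Icc (0 : ℝ) 1 := Set.Icc_subset_Icc ha hb
  constructor
  · have := intervalIntegral.integral_mono_on hab
      (intervalIntegrable_const (c := f b)) hint
      (fun x hx => hf (hIcc hx) (hIcc ⟨hab, le_refl b⟩) hx.2)
    simpa using this
  · have := intervalIntegral.integral_mono_on hab hint
      (intervalIntegrable_const (c := f a))
      (fun x hx => hf (hIcc ⟨le_refl a, hab⟩) (hIcc hx) hx.1)
    simpa using this

/-- Primitive convergence implies a.e. density convergence: if the
`φ_m` are non-increasing nonnegative uniformly bounded unit-integral densities on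
`[0,1]`, `φ` is such a density as well, and `∫_0^t φ_m → ∫_0^t φ` for every
`t ∈ (0,1)`, then `φ_m → φ` almost everywhere on `(0,1)`. -/
theorem primitive_convergence_ae (φs : ℕ → ℝ → ℝ) (φ : ℝ → ℝ) (C : ℝ)
    (h_anti : ∀ m, AntitoneOn (φs m) (Set.Icc (0 : ℝ) 1))
    (h_nonneg : ∀ m, ∀ t ∈ Set.Icc (0 : ℝ) 1, 0 ≤ φs m t)
    (h_bdd : ∀ m, ∀ t ∈ Set.Icc (0 : ℝ) 1, φs m t ≤ C)
    (h_int : ∀ m, ∫ s in (0 : ℝ)..1, φs m s = 1)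
    (hφ_anti : AntitoneOn φ (Set.Icc (0 : ℝ) 1))
    (hφ_nonneg : ∀ t ∈ Set.Icc (0 : ℝ) 1, 0 ≤ φ t)
    (hφ_bdd : ∀ t ∈ Set.Icc (0 : ℝ) 1, φ t ≤ C)
    (hφ_int : ∫ s in (0 : ℝ)..1, φ s = 1)
    (h_prim : ∀ t ∈ Set.Ioo (0 : ℝ) 1,
      Tendsto (fun m => ∫ s in (0 : ℝ)..t, φs m s) atTop
        (nhds (∫ s in (0 : ℝ)..t, φ s))) :
    ∀ᵐ t ∂(volume.restrict (Set.Ioo (0 : ℝ) 1)),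
      Tendsto (fun m => φs m t) atTop (nhds (φ t)) := by
  -- extend φ to an antitone function on ℝ
  set ψ : ℝ → ℝ := fun s => φ (min 1 (max 0 s)) with hψdef
  have hproj : ∀ s : ℝ, min 1 (max 0 s) ∈ Set.Icc (0 : ℝ) 1 := fun s =>
    ⟨le_min zero_le_one (le_max_left 0 s), min_le_left 1 _⟩
  have hψeq : ∀ s ∈ Set.Icc (0 : ℝ) 1, ψ s = φ s := by
    intro s hs
    simp only [hψdef]
    rw [max_eq_right hs.1, min_eq_right hs.2]
  have hψ_anti : Antitone ψ := by
    intro x y hxy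
    exact hφ_anti (hproj x) (hproj y)
      (min_le_min le_rfl (max_le_max le_rfl hxy))
  have hcount : Set.Countable {x | ¬ContinuousAt ψ x} :=
    hψ_anti.countable_not_continuousAt
  have hae : ∀ᵐ t ∂(volume.restrict (Set.Ioo (0 : ℝ) 1)), ContinuousAt ψ t :=
    ae_restrict_of_ae ((hcount.ae_notMem volume).mono fun x hx => not_not.1 hx)
  filter_upwards [hae, ae_restrict_mem measurableSet_Ioo] with t hcont ht
  obtain ⟨ht0, ht1⟩ := ht
  -- show convergence at t
  rw [Metric.tendsto_atTop]
  intro ε hε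
  have hε4 : 0 < ε / 4 := by linarith
  -- get δ from continuity
  obtain ⟨δ0, hδ0, hδ0c⟩ := Metric.continuousAt_iff.1 hcont (ε / 4) hε4
  set δ : ℝ := min (δ0 / 2) (min (t / 2) ((1 - t) / 2)) with hδdef
  have hδpos : 0 < δ := by
    apply lt_min (by linarith)
    exact lt_min (by linarith) (by linarith)
  have hδlt : δ < δ0 := lt_of_le_of_lt (min_le_left _ _) (by linarith)
  have hδt : δ ≤ t / 2 := le_trans (min_le_right _ _) (min_le_left _ _)
  have hδ1t : δ ≤ (1 - t) / 2 := le_trans (min_le_right _ _) (min_le_right _ _)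
  have htm : t - δ ∈ Set.Ioo (0:ℝ) 1 := ⟨by linarith, by linarith⟩
  have htp : t + δ ∈ Set.Ioo (0:ℝ) 1 := ⟨by linarith, by linarith⟩
  have htI : t ∈ Set.Icc (0:ℝ) 1 := ⟨le_of_lt ht0, le_of_lt ht1⟩
  -- continuity bounds
  have hφm : φ (t - δ) ≤ φ t + ε / 4 := by
    have h1 : dist (ψ (t - δ)) (ψ t) < ε / 4 := by
      apply hδ0c
      rw [Real.dist_eq]
      rw [abs_of_nonpos (by linarith)]
      linarith
    rw [hψeq _ ⟨le_of_lt htm.1, le_of_lt htm.2⟩, hψeq _ htI, Real.dist_eq] at h1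
    have := abs_lt.1 h1
    linarith [this.2]
  have hφp : φ t - ε / 4 ≤ φ (t + δ) := by
    have h1 : dist (ψ (t + δ)) (ψ t) < ε / 4 := by
      apply hδ0c
      rw [Real.dist_eq]
      rw [abs_of_nonneg (by linarith)]
      linarith
    rw [hψeq _ ⟨le_of_lt htp.1, le_of_lt htp.2⟩, hψeq _ htI, Real.dist_eq] at h1
    have := abs_lt.1 h1
    linarith [(abs_lt.1 h1).1]
  -- integrability helpers
  have integ : ∀ (f : ℝ → ℝ), AntitoneOn f (Set.Icc (0:ℝ) 1) →
      ∀ a b : ℝ, 0 ≤ a → a ≤ b → b ≤ 1 → IntervalIntegrable f volume a b := by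
    intro f hf a b ha hab hb
    apply (hf.mono _).intervalIntegrable
    rw [Set.uIcc_of_le hab]
    exact Set.Icc_subset_Icc ha hb
  -- differences of primitives
  have hsubL : ∀ m, (∫ s in (0:ℝ)..t, φs m s) - (∫ s in (0:ℝ)..(t - δ), φs m s)
      = ∫ s in (t - δ)..t, φs m s := fun m =>
    intervalIntegral.integral_interval_sub_left
      (integ _ (h_anti m) 0 t le_rfl (le_of_lt ht0) (le_of_lt ht1))
      (integ _ (h_anti m) 0 (t - δ) le_rfl (le_of_lt htm.1) (le_of_lt htm.2))
  have hsubR : ∀ m, (∫ s in (0:ℝ)..(t + δ), φs m s) - (∫ s in (0:ℝ)..t, φs m s)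
      = ∫ s in t..(t + δ), φs m s := fun m =>
    intervalIntegral.integral_interval_sub_left
      (integ _ (h_anti m) 0 (t + δ) le_rfl (le_of_lt htp.1) (le_of_lt htp.2))
      (integ _ (h_anti m) 0 t le_rfl (le_of_lt ht0) (le_of_lt ht1))
  have hsubLφ : (∫ s in (0:ℝ)..t, φ s) - (∫ s in (0:ℝ)..(t - δ), φ s)
      = ∫ s in (t - δ)..t, φ s :=
    intervalIntegral.integral_interval_sub_left
      (integ _ hφ_anti 0 t le_rfl (le_of_lt ht0) (le_of_lt ht1))
      (integ _ hφ_anti 0 (t - δ) le_rfl (le_of_lt htm.1) (le_of_lt htm.2))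
  have hsubRφ : (∫ s in (0:ℝ)..(t + δ), φ s) - (∫ s in (0:ℝ)..t, φ s)
      = ∫ s in t..(t + δ), φ s :=
    intervalIntegral.integral_interval_sub_left
      (integ _ hφ_anti 0 (t + δ) le_rfl (le_of_lt htp.1) (le_of_lt htp.2))
      (integ _ hφ_anti 0 t le_rfl (le_of_lt ht0) (le_of_lt ht1))
  -- convergence of the differences
  have hL : Tendsto (fun m => ∫ s in (t - δ)..t, φs m s) atTop
      (nhds (∫ s in (t - δ)..t, φ s)) := by
    rw [← hsubLφ]
    simp_rw [fun m => (hsubL m).symm]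
    exact ((h_prim t ⟨ht0, ht1⟩).sub (h_prim (t - δ) htm))
  have hR : Tendsto (fun m => ∫ s in t..(t + δ), φs m s) atTop
      (nhds (∫ s in t..(t + δ), φ s)) := by
    rw [← hsubRφ]
    simp_rw [fun m => (hsubR m).symm]
    exact ((h_prim (t + δ) htp).sub (h_prim t ⟨ht0, ht1⟩))
  -- limit bounds from antitonicity of φ
  have hLlim : (∫ s in (t - δ)..t, φ s) ≤ δ * φ (t - δ) := by
    have := (avg_bounds φ hφ_anti (le_of_lt htm.1) (by linarith) (le_of_lt ht1)).2
    have heq : t - (t - δ) = δ := by ring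
    rw [heq] at this
    exact this
  have hRlim : δ * φ (t + δ) ≤ ∫ s in t..(t + δ), φ s := by
    have := (avg_bounds φ hφ_anti (le_of_lt ht0) (by linarith) (le_of_lt htp.2)).1
    have heq : t + δ - t = δ := by ring
    rw [heq] at this
    exact this
  -- eventual bounds for φs m t
  have hδε : 0 < δ * (ε / 4) := mul_pos hδpos hε4
  have hLev : ∀ᶠ m in atTop,
      (∫ s in (t - δ)..t, φs m s) < (∫ s in (t - δ)..t, φ s) + δ * (ε / 4) :=
    (hL.eventually (eventually_lt_nhds (by linarith)))
  have hRev : ∀ᶠ m in atTop,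
      (∫ s in t..(t + δ), φ s) - δ * (ε / 4) < ∫ s in t..(t + δ), φs m s :=
    (hR.eventually (eventually_gt_nhds (by linarith)))
  rw [eventually_atTop] at hLev hRev
  obtain ⟨N1, hN1⟩ := hLev
  obtain ⟨N2, hN2⟩ := hRev
  refine ⟨max N1 N2, fun m hm => ?_⟩
  have h1 := hN1 m (le_trans (le_max_left _ _) hm)
  have h2 := hN2 m (le_trans (le_max_right _ _) hm)
  -- pointwise bounds from antitonicity of φs m
  have hup : δ * φs m t ≤ ∫ s in (t - δ)..t, φs m s := by
    have := (avg_bounds (φs m) (h_anti m) (le_of_lt htm.1) (by linarith) (le_of_lt ht1)).1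
    have heq : t - (t - δ) = δ := by ring
    rwa [heq] at this
  have hdown : (∫ s in t..(t + δ), φs m s) ≤ δ * φs m t := by
    have := (avg_bounds (φs m) (h_anti m) (le_of_lt ht0) (by linarith) (le_of_lt htp.2)).2
    have heq : t + δ - t = δ := by ring
    rwa [heq] at this
  -- combine
  have hub : φs m t < φ t + ε / 2 := by
    have h3 : δ * φs m t < δ * (φ (t - δ) + ε / 4) := by
      calc δ * φs m t ≤ ∫ s in (t - δ)..t, φs m s := hup
        _ < (∫ s in (t - δ)..t, φ s) + δ * (ε / 4) := h1
        _ ≤ δ * φ (t - δ) + δ * (ε / 4) := by linarith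
        _ = δ * (φ (t - δ) + ε / 4) := by ring
    have h4 := (mul_lt_mul_iff_right₀ hδpos).1 h3
    linarith
  have hlb : φ t - ε / 2 < φs m t := by
    have h3 : δ * (φ (t + δ) - ε / 4) < δ * φs m t := by
      calc δ * (φ (t + δ) - ε / 4) = δ * φ (t + δ) - δ * (ε / 4) := by ring
        _ ≤ (∫ s in t..(t + δ), φ s) - δ * (ε / 4) := by linarith
        _ < ∫ s in t..(t + δ), φs m s := h2
        _ ≤ δ * φs m t := hdown
    have h4 := (mul_lt_mul_iff_right₀ hδpos).1 h3
    linarith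
  rw [Real.dist_eq, abs_lt]
  constructor <;> linarith
end

section
/- Let ρ̂: ℝ^n → ℝ satisfy monotonicity, cash additivity, positive homogeneity, and subadditivity. Then there exists a nonempty convex compact set M ⊆ Δ_n such that ρ̂(x) = max_{a∈M} ∑_{i=1}^n a_i(−x_i) for all x ∈ ℝ^n. -/
/-!
A coherent `ρ` is sublinear, so by Hahn–Banach each value `ρ x` is attained by a linear
functional `g ≤ ρ`. Writing `g y = ∑ aᵢ (-yᵢ)`, the set of all `a` whose functional lies below `ρ`
is an intersection of closed half-spaces, hence closed and convex; testing it against unit vectors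
(monotonicity) and constants (cash additivity) puts it inside the simplex, hence it is compact.
-/

open Finset

section Sublinear

variable {E : Type*} [AddCommGroup E] [Module ℝ E] {p : E → ℝ}

theorem sublinear_map_zero (hom : ∀ c : ℝ, 0 < c → ∀ x, p (c • x) = c * p x) : p 0 = 0 := by
  have := hom 2 two_pos 0
  rw [smul_zero] at this
  linarith

theorem neg_sublinear_neg_le (hom : ∀ c : ℝ, 0 < c → ∀ x, p (c • x) = c * p x)
    (add : ∀ x y, p (x + y) ≤ p x + p y) (x : E) : -p (-x) ≤ p x := by
  have := add x (-x)
  rw [add_neg_cancel, sublinear_map_zero hom] at this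
  linarith

theorem exists_linearMap_le_sublinear_eq (hom : ∀ c : ℝ, 0 < c → ∀ x, p (c • x) = c * p x)
    (add : ∀ x y, p (x + y) ≤ p x + p y) (x₀ : E) :
    ∃ g : E →ₗ[ℝ] ℝ, (∀ y, g y ≤ p y) ∧ g x₀ = p x₀ := by
  have hp0 := sublinear_map_zero hom
  have hx₀ : ∀ c : ℝ, c • x₀ = 0 → c • p x₀ = 0 := by
    intro c hc
    rcases smul_eq_zero.1 hc with rfl | rfl
    · exact zero_smul ℝ _
    · rw [hp0, smul_zero]
  let f : E →ₗ.[ℝ] ℝ := LinearPMap.mkSpanSingleton' x₀ (p x₀) hx₀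
  have hf : ∀ z : f.domain, f z ≤ p z := by
    rintro ⟨z, hz⟩
    obtain ⟨c, rfl⟩ := Submodule.mem_span_singleton.1 hz
    rw [LinearPMap.mkSpanSingleton'_apply, RingHom.id_apply, smul_eq_mul]
    rcases lt_trichotomy c 0 with hc | rfl | hc
    · have hneg : p (c • x₀) = -c * p (-x₀) := by
        rw [← hom (-c) (neg_pos.2 hc), neg_smul_neg]
      nlinarith [neg_sublinear_neg_le hom add x₀]
    · simp [hp0]
    · exact (hom c hc x₀).ge
  obtain ⟨g, hgf, hgp⟩ := exists_extension_of_le_sublinear f p hom add hf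
  exact ⟨g, hgp, (hgf ⟨x₀, Submodule.mem_span_singleton_self x₀⟩).trans
    (LinearPMap.mkSpanSingleton'_apply_self _ _ _ _)⟩

end Sublinear

theorem LinearMap.apply_eq_sum_mul_neg {ι : Type*} [Fintype ι] [DecidableEq ι]
    (g : (ι → ℝ) →ₗ[ℝ] ℝ) (y : ι → ℝ) : g y = ∑ i, -g (Pi.single i 1) * -y i := by
  conv_lhs => rw [← univ_sum_single y]
  refine (map_sum g _ _).trans (sum_congr rfl fun i _ => ?_)
  rw [neg_mul_neg, mul_comm, ← smul_eq_mul, ← map_smul, ← Pi.single_smul', smul_eq_mul, mul_one]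

section Scenarios

variable {ι : Type*} [Fintype ι]

def scenarioSet (ρ : (ι → ℝ) → ℝ) : Set (ι → ℝ) :=
  {a | ∀ x, ∑ i, a i * -x i ≤ ρ x}

theorem convex_scenarioSet (ρ : (ι → ℝ) → ℝ) : Convex ℝ (scenarioSet ρ) := by
  simp only [scenarioSet, Set.ofPred_forall]
  refine convex_iInter fun x => convex_halfSpace_le ⟨fun a b => ?_, fun c a => ?_⟩ (ρ x)
  · simp only [Pi.add_apply, add_mul, sum_add_distrib]
  · simp only [Pi.smul_apply, smul_eq_mul, mul_assoc, mul_sum]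

theorem isClosed_scenarioSet (ρ : (ι → ℝ) → ℝ) : IsClosed (scenarioSet ρ) := by
  simp only [scenarioSet, Set.ofPred_forall]
  exact isClosed_iInter fun x => isClosed_le (by fun_prop) continuous_const

theorem scenarioSet_subset_stdSimplex [DecidableEq ι] {ρ : (ι → ℝ) → ℝ} (mono : Antitone ρ)
    (cash : ∀ (x : ι → ℝ) (m : ℝ), ρ (fun i => x i + m) = ρ x - m) (zero : ρ 0 = 0) :
    scenarioSet ρ ⊆ stdSimplex ℝ ι := by
  have hconst (m : ℝ) : ρ (fun _ => m) = -m := by simpa [zero] using cash 0 m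
  intro a ha
  refine ⟨fun i => ?_, le_antisymm ?_ ?_⟩
  · have hi : ρ (Pi.single i 1) ≤ 0 := zero ▸ mono (Pi.single_nonneg.2 zero_le_one)
    have hai : -a i ≤ ρ (Pi.single i 1) := by
      simpa [mul_neg, Pi.single_apply] using ha (Pi.single i 1)
    linarith
  · simpa [hconst] using ha fun _ => -1
  · simpa [hconst] using ha fun _ => 1

theorem isCompact_scenarioSet [DecidableEq ι] {ρ : (ι → ℝ) → ℝ} (mono : Antitone ρ)
    (cash : ∀ (x : ι → ℝ) (m : ℝ), ρ (fun i => x i + m) = ρ x - m) (zero : ρ 0 = 0) :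
    IsCompact (scenarioSet ρ) :=
  (isCompact_stdSimplex ℝ ι).of_isClosed_subset (isClosed_scenarioSet ρ)
    (scenarioSet_subset_stdSimplex mono cash zero)

theorem exists_mem_scenarioSet_eq {ρ : (ι → ℝ) → ℝ}
    (hom : ∀ c : ℝ, 0 < c → ∀ x, ρ (c • x) = c * ρ x) (add : ∀ x y, ρ (x + y) ≤ ρ x + ρ y)
    (x : ι → ℝ) : ∃ a ∈ scenarioSet ρ, ∑ i, a i * -x i = ρ x := by
  classical
  obtain ⟨g, hgρ, hgx⟩ := exists_linearMap_le_sublinear_eq hom add x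
  refine ⟨fun i => -g (Pi.single i 1), fun y => ?_, ?_⟩
  · rw [← g.apply_eq_sum_mul_neg]
    exact hgρ y
  · rw [← g.apply_eq_sum_mul_neg, hgx]

end Scenarios

/-- Finite-dimensional robust representation: every coherent risk
estimator `ρ̂ : ℝ^n → ℝ` is the support function (with attained maximum) of a
nonempty convex compact subset of the probability simplex. -/
theorem robust_representation_CRE (n : ℕ) (ρ : (Fin n → ℝ) → ℝ)
    (h_mono : ∀ x y : Fin n → ℝ, (∀ i, x i ≤ y i) → ρ y ≤ ρ x)
    (h_cash : ∀ (x : Fin n → ℝ) (m : ℝ), ρ (fun i => x i + m) = ρ x - m)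
    (h_hom : ∀ (x : Fin n → ℝ) (l : ℝ), 0 ≤ l → ρ (fun i => l * x i) = l * ρ x)
    (h_sub : ∀ x y : Fin n → ℝ, ρ (fun i => x i + y i) ≤ ρ x + ρ y) :
    ∃ M : Set (Fin n → ℝ), M.Nonempty ∧ Convex ℝ M ∧ IsCompact M ∧
      (∀ a ∈ M, (∀ i, 0 ≤ a i) ∧ ∑ i, a i = 1) ∧
      ∀ x : Fin n → ℝ, ∃ a ∈ M,
        ρ x = ∑ i, a i * (-(x i)) ∧
          ∀ b ∈ M, ∑ i, b i * (-(x i)) ≤ ρ x := by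
  have zero : ρ 0 = 0 := by simpa [← Pi.zero_def] using h_hom 0 0 le_rfl
  have mono : Antitone ρ := fun x y hxy => h_mono x y hxy
  have attained := exists_mem_scenarioSet_eq (fun c hc x => h_hom x c hc.le) h_sub
  refine ⟨scenarioSet ρ, ?_, convex_scenarioSet ρ, isCompact_scenarioSet mono h_cash zero,
    fun a ha => scenarioSet_subset_stdSimplex mono h_cash zero ha, fun x => ?_⟩
  · obtain ⟨a, ha, -⟩ := attained 0
    exact ⟨a, ha⟩
  · obtain ⟨a, ha, hax⟩ := attained x
    exact ⟨a, ha, hax.symm, fun b hb => hb x⟩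
end

section
/- Let ρ̂: ℝ^n → ℝ be a coherent risk estimator that is additionally permutation-invariant (law-invariant). Then there exists a nonempty convex set M^s ⊆ Δ_n^↓ such that ρ̂(x) = sup_{a∈M^s} ∑_{i=1}^n a_i(−x_{i:n}) for all x, with the supremum attained. -/
/-!
A coherent risk estimator is sublinear, so by Hahn–Banach it is the pointwise maximum of the
linear functionals `z ↦ ∑ aᵢ (-zᵢ)` it dominates; monotonicity and cash additivity force these
weights `a` to be probability vectors. Under permutation invariance, any dominated `a` stays
dominated after being rearranged into non-increasing order and evaluated on sorted arguments,
and by the rearrangement inequality this rearrangement is still maximal at the point where `a`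
was. The set of non-increasing dominated probability vectors is therefore the required `Mˢ`.
-/

open Finset

section Sublinear

variable {E : Type*} [AddCommGroup E] [Module ℝ E]

theorem exists_linearMap_le_eq_of_sublinear (N : E → ℝ)
    (N_hom : ∀ c : ℝ, 0 < c → ∀ x, N (c • x) = c * N x)
    (N_add : ∀ x y, N (x + y) ≤ N x + N y) (w : E) :
    ∃ g : E →ₗ[ℝ] ℝ, (∀ x, g x ≤ N x) ∧ g w = N w := by
  have N_zero : N 0 = 0 := by
    have h := N_hom 2 two_pos 0
    rw [smul_zero] at h
    linarith
  have mul_le_smul : ∀ c : ℝ, c * N w ≤ N (c • w) := by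
    intro c
    rcases lt_trichotomy c 0 with hc | rfl | hc
    · have h := N_add (c • w) ((-c) • w)
      rw [← add_smul, add_neg_cancel, zero_smul, N_zero, N_hom _ (neg_pos.2 hc)] at h
      linarith
    · simp [N_zero]
    · exact (N_hom c hc w).ge
  let f : E →ₗ.[ℝ] ℝ := LinearPMap.mkSpanSingleton' w (N w) fun c hc => by
    rcases smul_eq_zero.1 hc with rfl | rfl
    · exact zero_smul ℝ _
    · rw [N_zero, smul_zero]
  have hf : ∀ x : f.domain, f x ≤ N x := by
    rintro ⟨x, hx⟩
    obtain ⟨c, rfl⟩ := Submodule.mem_span_singleton.1 hx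
    exact (LinearPMap.mkSpanSingleton'_apply w (N w) _ c hx).trans_le (mul_le_smul c)
  obtain ⟨g, hgf, hgN⟩ := exists_extension_of_le_sublinear f N N_hom N_add hf
  refine ⟨g, hgN, ?_⟩
  have hw : w ∈ f.domain := Submodule.mem_span_singleton_self w
  exact (hgf ⟨w, hw⟩).trans (LinearPMap.mkSpanSingleton'_apply_self w (N w) _ hw)

end Sublinear

section CoherentRisk

variable {ι : Type*}

structure IsCoherentRiskEstimator (ρ : (ι → ℝ) → ℝ) : Prop where
  mono : ∀ x y : ι → ℝ, (∀ i, x i ≤ y i) → ρ y ≤ ρ x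
  cash : ∀ (x : ι → ℝ) (m : ℝ), ρ (fun i => x i + m) = ρ x - m
  hom : ∀ (x : ι → ℝ) (l : ℝ), 0 ≤ l → ρ (fun i => l * x i) = l * ρ x
  sub : ∀ x y : ι → ℝ, ρ (fun i => x i + y i) ≤ ρ x + ρ y

namespace IsCoherentRiskEstimator

variable {ρ : (ι → ℝ) → ℝ}

theorem map_zero (hρ : IsCoherentRiskEstimator ρ) : ρ 0 = 0 := by
  simpa [← Pi.zero_def] using hρ.hom 0 0 le_rfl

theorem map_const (hρ : IsCoherentRiskEstimator ρ) (m : ℝ) : ρ (fun _ => m) = -m := by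
  simpa [hρ.map_zero] using hρ.cash 0 m

theorem exists_prob_le_eq [Fintype ι] (hρ : IsCoherentRiskEstimator ρ) (w : ι → ℝ) :
    ∃ a : ι → ℝ, (∀ i, 0 ≤ a i) ∧ ∑ i, a i = 1 ∧
      (∀ z, ∑ i, a i * -z i ≤ ρ z) ∧ ∑ i, a i * -w i = ρ w := by
  classical
  obtain ⟨g, hgρ, hgw⟩ := exists_linearMap_le_eq_of_sublinear ρ
    (fun c hc x => hρ.hom x c hc.le) hρ.sub w
  let e : ι → ι → ℝ := fun i j => if i = j then 1 else 0
  let a : ι → ℝ := fun i => -g (e i)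
  have hga : ∀ z, ∑ i, a i * -z i = g z := fun z => by
    simp [a, e, g.pi_apply_eq_sum_univ z, mul_comm]
  have ha_nonneg : ∀ i, 0 ≤ a i := fun i => by
    have hmono : ρ (e i) ≤ ρ 0 := hρ.mono 0 (e i) fun j => by
      simp only [e, Pi.zero_apply]; split_ifs <;> norm_num
    have := hgρ (e i)
    simp only [a, hρ.map_zero] at hmono ⊢
    linarith
  have hconst : ∀ m : ℝ, -m * ∑ i, a i ≤ -m := fun m => by
    simpa [← hga, ← hρ.map_const m, Finset.mul_sum, mul_comm] using hgρ fun _ => m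
  refine ⟨a, ha_nonneg, ?_, fun z => (hga z).trans_le (hgρ z), (hga w).trans hgw⟩
  linarith [hconst 1, hconst (-1)]

end IsCoherentRiskEstimator

end CoherentRisk

section OrderStatistics

variable {n : ℕ}

theorem orderStat_of_monotone {x : Fin n → ℝ} (hx : Monotone x) (i : Fin n) :
    orderStat x (i + 1) = x i := by
  have hperm : ((Finset.univ.val.map x).sort (· ≤ ·)).Perm (List.ofFn x) := by
    rw [← Multiset.coe_eq_coe, Multiset.sort_eq, List.ofFn_eq_map]
    rfl
  have hsorted : (Finset.univ.val.map x).sort (· ≤ ·) = List.ofFn x :=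
    hperm.eq_of_pairwise' (Multiset.pairwise_sort _ _) hx.sortedLE_ofFn.pairwise
  rw [orderStat, Nat.add_sub_cancel, hsorted, List.getD_eq_getElem _ _ (by simp)]
  simp

theorem orderStat_comp_perm (x : Fin n → ℝ) (σ : Equiv.Perm (Fin n)) :
    orderStat (x ∘ σ) = orderStat x := by
  have h : Finset.univ.val.map (x ∘ σ) = Finset.univ.val.map x := by
    rw [← Multiset.map_map, Multiset.map_univ_val_equiv]
  funext i
  rw [orderStat, orderStat, h]

theorem orderStat_eq_apply_sort (x : Fin n → ℝ) (i : Fin n) :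
    orderStat x (i + 1) = x (Tuple.sort x i) := by
  rw [← orderStat_comp_perm x (Tuple.sort x), orderStat_of_monotone (Tuple.monotone_sort x)]
  rfl

theorem sum_comp_perm_mul_neg_le_sum_mul_neg_orderStat {b : Fin n → ℝ} (hb : Antitone b)
    (σ : Equiv.Perm (Fin n)) (w : Fin n → ℝ) :
    ∑ i, b (σ i) * -w i ≤ ∑ i, b i * -orderStat w (i + 1) := by
  set τ := Tuple.sort w
  have hw : Antitone fun i => -w (τ i) := fun i j hij => neg_le_neg (Tuple.monotone_sort w hij)
  calc ∑ i, b (σ i) * -w i = ∑ i, b ((τ.trans σ) i) * -w (τ i) :=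
        (Equiv.sum_comp τ fun i => b (σ i) * -w i).symm
    _ ≤ ∑ i, b i * -w (τ i) := (hb.monovary hw).sum_comp_perm_smul_le_sum_smul
    _ = ∑ i, b i * -orderStat w (i + 1) := by simp only [orderStat_eq_apply_sort, τ]

theorem sum_comp_perm_mul_neg_orderStat_le {ρ : (Fin n → ℝ) → ℝ}
    (h_law : ∀ (x : Fin n → ℝ) (σ : Equiv.Perm (Fin n)), ρ (x ∘ σ) = ρ x)
    {a : Fin n → ℝ} (ha : ∀ z, ∑ i, a i * -z i ≤ ρ z) (π : Equiv.Perm (Fin n)) (y : Fin n → ℝ) :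
    ∑ i, a (π i) * -orderStat y (i + 1) ≤ ρ y := by
  set σ := π.symm.trans (Tuple.sort y)
  calc ∑ i, a (π i) * -orderStat y (i + 1) = ∑ j, a j * -(y ∘ σ) j := by
        rw [← Equiv.sum_comp π fun j => a j * -(y ∘ σ) j]
        simp [σ, orderStat_eq_apply_sort]
    _ ≤ ρ (y ∘ σ) := ha _
    _ = ρ y := h_law y σ

end OrderStatistics

section Representation

variable {n : ℕ}

/-- The paper's `Mˢ`. -/
def antitoneDualSet (ρ : (Fin n → ℝ) → ℝ) : Set (Fin n → ℝ) :=
  {a | (∀ i, 0 ≤ a i) ∧ Antitone a ∧ ∑ i, a i = 1 ∧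
    ∀ y, ∑ i, a i * -orderStat y (i + 1) ≤ ρ y}

theorem convex_antitoneDualSet (ρ : (Fin n → ℝ) → ℝ) : Convex ℝ (antitoneDualSet ρ) := by
  rintro a ⟨ha_nonneg, ha_anti, ha_sum, ha_le⟩ b ⟨hb_nonneg, hb_anti, hb_sum, hb_le⟩ s t hs ht hst
  refine ⟨fun i => ?_, fun i j hij => ?_, ?_, fun y => ?_⟩ <;>
    simp only [Pi.add_apply, Pi.smul_apply, smul_eq_mul]
  · exact add_nonneg (mul_nonneg hs (ha_nonneg i)) (mul_nonneg ht (hb_nonneg i))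
  · gcongr
    exacts [ha_anti hij, hb_anti hij]
  · rw [sum_add_distrib, ← mul_sum, ← mul_sum, ha_sum, hb_sum, mul_one, mul_one, hst]
  · simp only [add_mul, mul_assoc, sum_add_distrib, ← mul_sum]
    calc s * ∑ i, a i * -orderStat y (i + 1) + t * ∑ i, b i * -orderStat y (i + 1)
        ≤ s * ρ y + t * ρ y := by gcongr; exacts [ha_le y, hb_le y]
      _ = ρ y := by rw [← add_mul, hst, one_mul]

theorem exists_mem_antitoneDualSet_eq {ρ : (Fin n → ℝ) → ℝ} (hρ : IsCoherentRiskEstimator ρ)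
    (h_law : ∀ (x : Fin n → ℝ) (σ : Equiv.Perm (Fin n)), ρ (x ∘ σ) = ρ x) (x : Fin n → ℝ) :
    ∃ b ∈ antitoneDualSet ρ, ρ x = ∑ i, b i * -orderStat x (i + 1) := by
  obtain ⟨a, ha_nonneg, ha_sum, ha_le, hax⟩ := hρ.exists_prob_le_eq x
  -- `b` is the non-increasing rearrangement of `a`
  set π := Fin.revPerm.trans (Tuple.sort a)
  set b := a ∘ π
  have hb_anti : Antitone b := fun i j hij => Tuple.monotone_sort a (Fin.rev_le_rev.2 hij)
  have hb_le : ∀ y, ∑ i, b i * -orderStat y (i + 1) ≤ ρ y :=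
    sum_comp_perm_mul_neg_orderStat_le h_law ha_le π
  refine ⟨b, ⟨fun i => ha_nonneg _, hb_anti, (Equiv.sum_comp π a).trans ha_sum, hb_le⟩,
    le_antisymm ?_ (hb_le x)⟩
  calc ρ x = ∑ i, b (π.symm i) * -x i := by
        simp only [b, Function.comp_apply, Equiv.apply_symm_apply, hax]
    _ ≤ ∑ i, b i * -orderStat x (i + 1) :=
      sum_comp_perm_mul_neg_le_sum_mul_neg_orderStat hb_anti π.symm x

end Representation

/-- Every law-invariant (permutation-invariant) coherent risk
estimator is the attained supremum of L-functionals over a nonempty convex set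
of non-increasing probability vectors. -/
theorem law_invariant_CRE_representation (n : ℕ) (ρ : (Fin n → ℝ) → ℝ)
    (h_mono : ∀ x y : Fin n → ℝ, (∀ i, x i ≤ y i) → ρ y ≤ ρ x)
    (h_cash : ∀ (x : Fin n → ℝ) (m : ℝ), ρ (fun i => x i + m) = ρ x - m)
    (h_hom : ∀ (x : Fin n → ℝ) (l : ℝ), 0 ≤ l → ρ (fun i => l * x i) = l * ρ x)
    (h_sub : ∀ x y : Fin n → ℝ, ρ (fun i => x i + y i) ≤ ρ x + ρ y)
    (h_law : ∀ (x : Fin n → ℝ) (σ : Equiv.Perm (Fin n)), ρ (x ∘ σ) = ρ x) :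
    ∃ Ms : Set (Fin n → ℝ), Ms.Nonempty ∧ Convex ℝ Ms ∧
      (∀ a ∈ Ms, (∀ i, 0 ≤ a i) ∧ (∀ i j : Fin n, i ≤ j → a j ≤ a i) ∧ ∑ i, a i = 1) ∧
      ∀ x : Fin n → ℝ, ∃ a ∈ Ms,
        ρ x = ∑ i : Fin n, a i * (-(orderStat x (i + 1))) ∧
          ∀ b ∈ Ms, ∑ i : Fin n, b i * (-(orderStat x (i + 1))) ≤ ρ x := by
  have hρ : IsCoherentRiskEstimator ρ := ⟨h_mono, h_cash, h_hom, h_sub⟩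
  have attained := exists_mem_antitoneDualSet_eq hρ h_law
  refine ⟨antitoneDualSet ρ, (attained 0).imp fun a ha => ha.1, convex_antitoneDualSet ρ,
    fun a ha => ⟨ha.1, fun i j hij => ha.2.1 hij, ha.2.2.1⟩, fun x => ?_⟩
  obtain ⟨a, ha, hax⟩ := attained x
  exact ⟨a, ha, hax, fun b hb => hb.2.2.2 x⟩
end
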